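/- arXiv:0909.4126 — 2 statements merged into one kernel-verified Lean document; each statement's English description precedes it below -/
import Mathlib

section
/- Let X₁, …, Xₙ be exchangeable real random variables with finite mean, and let a, b ∈ ℝⁿ with a ≺ b (a is majorized by b, i.e., a = Tb for some doubly stochastic matrix T). Then ∑ᵢ aᵢXᵢ ≤_cx ∑ᵢ bᵢXᵢ. -/
open MeasureTheory

/-- The convex order `X ≤_cx Y`. -/
def ConvexOrder {Ω : Type*} [MeasurableSpace Ω] (ℙ : Measure Ω) (X Y : Ω → ℝ) : Prop :=
  ∀ φ : ℝ → ℝ, ConvexOn ℝ Set.univ φ →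
    Integrable (fun ω => φ (X ω)) ℙ → Integrable (fun ω => φ (Y ω)) ℙ →
    ∫ ω, φ (X ω) ∂ℙ ≤ ∫ ω, φ (Y ω) ∂ℙ

/-- `T` is doubly stochastic. -/
def DoublyStochastic {n : ℕ} (T : Matrix (Fin n) (Fin n) ℝ) : Prop :=
  (∀ i j, 0 ≤ T i j) ∧ (∀ i, ∑ j, T i j = 1) ∧ (∀ j, ∑ i, T i j = 1)

/-- `a ≺ b`: `a` is majorized by `b`, i.e. `a = T b` for a doubly stochastic `T`. -/
def MajorizedBy {n : ℕ} (a b : Fin n → ℝ) : Prop :=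
  ∃ T : Matrix (Fin n) (Fin n) ℝ, DoublyStochastic T ∧ a = T.mulVec b

/-- `X₁, …, Xₙ` are exchangeable: the joint law is permutation invariant. -/
def Exchangeable {Ω : Type*} [MeasurableSpace Ω] (ℙ : Measure Ω) {n : ℕ}
    (X : Fin n → Ω → ℝ) : Prop :=
  ∀ σ : Equiv.Perm (Fin n),
    Measure.map (fun ω => fun i => X (σ i) ω) ℙ = Measure.map (fun ω => fun i => X i ω) ℙ


/-! By Birkhoff's theorem `a = ∑_σ w_σ (b ∘ σ)` for a probability vector `w` on permutations, so
`∑ aᵢ Xᵢ` is the convex combination `∑_σ w_σ ∑ᵢ b_{σ i} Xᵢ`. By exchangeability each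
`∑ᵢ b_{σ i} Xᵢ` has the law of `∑ᵢ bᵢ Xᵢ`, and Jensen's inequality, applied pointwise and then
integrated, bounds `E φ(∑ aᵢ Xᵢ)` by `E φ(∑ bᵢ Xᵢ)`. -/

open Finset
open scoped Matrix
open ProbabilityTheory (IdentDistrib)

lemma Matrix.exists_mulVec_eq_sum_comp_perm_of_mem_doublyStochastic {R ι : Type*} [Fintype ι]
    [DecidableEq ι] [Field R] [LinearOrder R] [IsStrictOrderedRing R] {M : Matrix ι ι R}
    (hM : M ∈ doublyStochastic R ι) (v : ι → R) :
    ∃ w : Equiv.Perm ι → R, (∀ σ, 0 ≤ w σ) ∧ ∑ σ, w σ = 1 ∧ M *ᵥ v = ∑ σ, w σ • (v ∘ σ) := by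
  obtain ⟨w, hw0, hw1, rfl⟩ := exists_eq_sum_perm_of_mem_doublyStochastic hM
  refine ⟨w, hw0, hw1, ?_⟩
  simp only [Matrix.sum_mulVec, Matrix.smul_mulVec, Matrix.permMatrix_mulVec]

lemma MajorizedBy.exists_eq_sum_comp_perm {n : ℕ} {a b : Fin n → ℝ} (hab : MajorizedBy a b) :
    ∃ w : Equiv.Perm (Fin n) → ℝ, (∀ σ, 0 ≤ w σ) ∧ ∑ σ, w σ = 1 ∧ a = ∑ σ, w σ • (b ∘ σ) := by
  obtain ⟨T, hT, rfl⟩ := hab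
  exact Matrix.exists_mulVec_eq_sum_comp_perm_of_mem_doublyStochastic
    (mem_doublyStochastic_iff_sum.2 hT) b

theorem convexOrder_sum_mul_of_identDistrib {Ω ι : Type*} [MeasurableSpace Ω] {ℙ : Measure Ω}
    [Fintype ι] {w : ι → ℝ} (hw0 : ∀ i, 0 ≤ w i) (hw1 : ∑ i, w i = 1) {Z : ι → Ω → ℝ}
    {Y : Ω → ℝ} (hZ : ∀ i, IdentDistrib (Z i) Y ℙ ℙ) :
    ConvexOrder ℙ (fun ω => ∑ i, w i * Z i ω) Y := by
  intro φ hφ hφZ hφY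
  have hφm : Measurable φ := (continuousOn_univ.1 (hφ.continuousOn isOpen_univ)).measurable
  have hφZi : ∀ i, IdentDistrib (fun ω => φ (Z i ω)) (fun ω => φ (Y ω)) ℙ ℙ :=
    fun i => (hZ i).comp hφm
  have hint : ∀ i, Integrable (fun ω => w i * φ (Z i ω)) ℙ :=
    fun i => ((hφZi i).integrable_iff.2 hφY).const_mul _
  have jensen : ∀ ω, φ (∑ i, w i * Z i ω) ≤ ∑ i, w i * φ (Z i ω) := fun ω => by
    simpa only [smul_eq_mul] using
      hφ.map_sum_le (fun i _ => hw0 i) hw1 (fun i _ => Set.mem_univ (Z i ω))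
  calc ∫ ω, φ (∑ i, w i * Z i ω) ∂ℙ
      ≤ ∫ ω, ∑ i, w i * φ (Z i ω) ∂ℙ :=
        integral_mono hφZ (integrable_finsetSum _ fun i _ => hint i) jensen
    _ = ∑ i, w i * ∫ ω, φ (Y ω) ∂ℙ := by
        rw [integral_finsetSum _ fun i _ => hint i]
        exact sum_congr rfl fun i _ => by rw [integral_const_mul, (hφZi i).integral_eq]
    _ = ∫ ω, φ (Y ω) ∂ℙ := by rw [← sum_mul, hw1, one_mul]

section Exchangeable

variable {Ω : Type*} [MeasurableSpace Ω] {ℙ : Measure Ω} {n : ℕ} {X : Fin n → Ω → ℝ}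

lemma Exchangeable.identDistrib_comp_perm (hX : Exchangeable ℙ X) (hXm : ∀ i, Measurable (X i))
    (σ : Equiv.Perm (Fin n)) :
    IdentDistrib (fun ω i => X (σ i) ω) (fun ω i => X i ω) ℙ ℙ :=
  ⟨(measurable_pi_lambda _ fun i => hXm (σ i)).aemeasurable,
    (measurable_pi_lambda _ hXm).aemeasurable, hX σ⟩

lemma Exchangeable.identDistrib_sum_comp_perm_mul (hX : Exchangeable ℙ X)
    (hXm : ∀ i, Measurable (X i)) (b : Fin n → ℝ) (σ : Equiv.Perm (Fin n)) :
    IdentDistrib (fun ω => ∑ i, b (σ i) * X i ω) (fun ω => ∑ i, b i * X i ω) ℙ ℙ := by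
  have hlin : Measurable fun v : Fin n → ℝ => ∑ i, b i * v i := by fun_prop
  convert (hX.identDistrib_comp_perm hXm σ⁻¹).comp hlin using 2 with ω
  · exact Fintype.sum_equiv σ _ _ fun i => by simp
  · rfl

end Exchangeable

theorem stmt_7_general {Ω : Type*} [MeasurableSpace Ω] (ℙ : Measure Ω)
    {n : ℕ} (X : Fin n → Ω → ℝ) (hXm : ∀ i, Measurable (X i))
    (hexch : Exchangeable ℙ X)
    (a b : Fin n → ℝ) (hab : MajorizedBy a b) :
    ConvexOrder ℙ (fun ω => ∑ i, a i * X i ω) (fun ω => ∑ i, b i * X i ω) := by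
  obtain ⟨w, hw0, hw1, rfl⟩ := hab.exists_eq_sum_comp_perm
  have hsum : (fun ω => ∑ i, (∑ σ, w σ • (b ∘ σ)) i * X i ω) =
      fun ω => ∑ σ, w σ * ∑ i, b (σ i) * X i ω := by
    ext ω
    simp only [Finset.sum_apply, Pi.smul_apply, Function.comp_apply, smul_eq_mul, sum_mul,
      mul_sum, mul_assoc]
    exact sum_comm
  rw [hsum]
  exact convexOrder_sum_mul_of_identDistrib hw0 hw1 fun σ =>
    hexch.identDistrib_sum_comp_perm_mul hXm b σ

theorem stmt_7 {Ω : Type*} [MeasurableSpace Ω] (ℙ : Measure Ω) [IsProbabilityMeasure ℙ]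
    {n : ℕ} (X : Fin n → Ω → ℝ) (hXm : ∀ i, Measurable (X i))
    (hint : ∀ i, Integrable (X i) ℙ)
    (hexch : Exchangeable ℙ X)
    (a b : Fin n → ℝ) (hab : MajorizedBy a b) :
    ConvexOrder ℙ (fun ω => ∑ i, a i * X i ω) (fun ω => ∑ i, b i * X i ω) :=
  stmt_7_general ℙ X hXm hexch a b hab
end

section
/- If f and g are log-concave probability densities on ℝ, then their convolution f * g is log-concave. -/
open MeasureTheory

/-- Log-concave probability density on `ℝ`. -/
def IsLogConcaveDensity (g : ℝ → ℝ) : Prop :=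
  (∀ x, 0 ≤ g x) ∧ (∫ x, g x = 1) ∧ Convex ℝ {x | 0 < g x} ∧
    ConcaveOn ℝ {x | 0 < g x} (fun x => Real.log (g x))

/-!
The convolution is log-concave because, for a log-concave pair `f`, `g`, the integrands
`u = f (a - ·) * g`, `v = f (b - ·) * g` and `w = f ((1 - t) a + t b - ·) * g` satisfy
`u x ^ (1 - t) * v y ^ t ≤ w ((1 - t) x + t y)`, so the Prékopa–Leindler inequality
`(∫ u) ^ (1 - t) * (∫ v) ^ t ≤ ∫ w` gives the same inequality for `f * g`.

On `ℝ`, Prékopa–Leindler reduces to the one-dimensional Brunn–Minkowski inequality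
`|A| + |B| ≤ |A + B|`: after normalising `u` and `v` to have supremum `1`, their superlevel
sets `{u > r}` and `{v > r}` are nonempty for `r < 1`, and `(1 - t) • {u > r} + t • {v > r}` lies
in `{w > r}`; integrating over `r` (layer cake) gives `(1 - t) ∫ u + t ∫ v ≤ ∫ w`, and weighted
AM–GM turns this into the multiplicative form.
-/

open Set ENNReal Pointwise
open scoped NNReal

namespace ENNReal

theorem min_le_rpow_mul_rpow (a b : ℝ≥0∞) {t : ℝ} (ht₀ : 0 ≤ t) (ht₁ : t ≤ 1) :
    min a b ≤ a ^ (1 - t) * b ^ t :=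
  calc min a b = min a b ^ (1 - t) * min a b ^ t := by
        rw [← rpow_add_of_nonneg _ _ (sub_nonneg.2 ht₁) ht₀, sub_add_cancel, rpow_one]
    _ ≤ a ^ (1 - t) * b ^ t := by
        gcongr
        exacts [min_le_left _ _, min_le_right _ _]

theorem rpow_mul_rpow_le_add (a b : ℝ≥0∞) {t : ℝ} (ht₀ : 0 < t) (ht₁ : t < 1) :
    a ^ (1 - t) * b ^ t ≤ ENNReal.ofReal (1 - t) * a + ENNReal.ofReal t * b := by
  have hs : 0 < 1 - t := sub_pos.2 ht₁
  rcases eq_or_ne a ∞ with rfl | ha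
  · rw [mul_top (ofReal_pos.2 hs).ne', top_add]
    exact le_top
  rcases eq_or_ne b ∞ with rfl | hb
  · rw [mul_top (ofReal_pos.2 ht₀).ne', add_top]
    exact le_top
  lift a to ℝ≥0 using ha
  lift b to ℝ≥0 using hb
  have hw : (1 - t).toNNReal + t.toNNReal = 1 := by
    rw [← Real.toNNReal_add hs.le ht₀.le, sub_add_cancel, Real.toNNReal_one]
  have := NNReal.geom_mean_le_arith_mean2_weighted _ _ a b hw
  rw [Real.coe_toNNReal _ hs.le, Real.coe_toNNReal _ ht₀.le] at this
  rw [← coe_rpow_of_nonneg _ hs.le, ← coe_rpow_of_nonneg _ ht₀.le, ENNReal.ofReal,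
    ENNReal.ofReal]
  exact_mod_cast this

theorem iSup_rpow {ι : Sort*} (f : ι → ℝ≥0∞) {p : ℝ} (hp : 0 < p) :
    (⨆ i, f i) ^ p = ⨆ i, f i ^ p :=
  (orderIsoRpow p hp).map_iSup f

theorem ofReal_rpow_mul_rpow_le {a b c t : ℝ} (ha : 0 ≤ a) (hb : 0 ≤ b) (ht₀ : 0 ≤ t)
    (ht₁ : t ≤ 1) (h : a ^ (1 - t) * b ^ t ≤ c) :
    ENNReal.ofReal a ^ (1 - t) * ENNReal.ofReal b ^ t ≤ ENNReal.ofReal c := by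
  rw [ofReal_rpow_of_nonneg ha (sub_nonneg.2 ht₁), ofReal_rpow_of_nonneg hb ht₀,
    ← ofReal_mul (Real.rpow_nonneg ha _)]
  exact ofReal_le_ofReal h

end ENNReal

theorem IsCompact.volume_add_volume_le_volume_add {K L : Set ℝ} (hK : IsCompact K)
    (hL : IsCompact L) (hK₀ : K.Nonempty) (hL₀ : L.Nonempty) :
    volume K + volume L ≤ volume (K + L) := by
  obtain ⟨k, hkK, hk⟩ := hK.exists_isGreatest hK₀
  obtain ⟨l, hlL, hl⟩ := hL.exists_isLeast hL₀
  have hinter : (l +ᵥ K) ∩ (k +ᵥ L) ⊆ {k + l} := by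
    rintro _ ⟨⟨x, hx, rfl⟩, ⟨y, hy, hxy⟩⟩
    have := hk hx
    have := hl hy
    simp only [vadd_eq_add, mem_singleton_iff] at hxy ⊢
    linarith
  calc volume K + volume L = volume (l +ᵥ K) + volume (k +ᵥ L) := by
        rw [measure_vadd, measure_vadd]
    _ = volume ((l +ᵥ K) ∪ (k +ᵥ L)) + volume ((l +ᵥ K) ∩ (k +ᵥ L)) :=
        (measure_union_add_inter _ (hL.measurableSet.const_vadd k)).symm
    _ ≤ volume (K + L) + 0 := by
        refine add_le_add (measure_mono (union_subset ?_ (vadd_set_subset_add hkK)))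
          (measure_mono_null hinter (measure_singleton _)).le
        rw [add_comm K]
        exact vadd_set_subset_add hlL
    _ = volume (K + L) := add_zero _

theorem MeasurableSet.volume_add_volume_le_volume_add {A B : Set ℝ} (hA : MeasurableSet A)
    (hB : MeasurableSet B) (hA₀ : A.Nonempty) (hB₀ : B.Nonempty) :
    volume A + volume B ≤ volume (A + B) := by
  obtain ⟨a, ha⟩ := hA₀
  obtain ⟨b, hb⟩ := hB₀
  rw [hA.measure_eq_iSup_isCompact, hB.measure_eq_iSup_isCompact]
  simp only [iSup_and']
  refine ENNReal.biSup_add_biSup_le' ⟨∅, empty_subset _, isCompact_empty⟩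
    ⟨∅, empty_subset _, isCompact_empty⟩ fun K ⟨hKA, hK⟩ L ⟨hLB, hL⟩ => ?_
  calc volume K + volume L ≤ volume (insert a K) + volume (insert b L) := by
        gcongr <;> exact subset_insert _ _
    _ ≤ volume (insert a K + insert b L) :=
        (hK.insert a).volume_add_volume_le_volume_add (hL.insert b) (insert_nonempty _ _)
          (insert_nonempty _ _)
    _ ≤ volume (A + B) := by
        gcongr
        · exact insert_subset ha hKA
        · exact insert_subset hb hLB

theorem lintegral_min_one_eq_setLIntegral_measure_lt {α : Type*} [MeasurableSpace α]
    (μ : Measure α) {u : α → ℝ≥0∞} (hu : Measurable u) :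
    ∫⁻ x, min (u x) 1 ∂μ = ∫⁻ r in Ioo 0 1, μ {x | ENNReal.ofReal r < u x} := by
  have hfin (x : α) : min (u x) 1 ≠ ∞ := ((min_le_right _ _).trans_lt one_lt_top).ne
  have hlevel : EqOn (fun r : ℝ => μ {x | r < (min (u x) 1).toReal})
      (fun r => μ {x | ENNReal.ofReal r < u x}) (Ioo 0 1) := by
    intro r hr
    simp only [← ofReal_lt_iff_lt_toReal hr.1.le (hfin _), lt_min_iff, ofReal_lt_one.2 hr.2,
      and_true]
  have hempty : EqOn (fun r : ℝ => μ {x | r < (min (u x) 1).toReal}) 0 (Ici 1) := by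
    intro r hr
    have hle (x : α) : (min (u x) 1).toReal ≤ r :=
      (toReal_le_of_le_ofReal zero_le_one (by simp)).trans hr
    simp [fun x => not_lt.2 (hle x)]
  rw [← lintegral_congr fun x => ofReal_toReal (hfin x),
    lintegral_eq_lintegral_meas_lt μ (ae_of_all _ fun _ => toReal_nonneg)
      (hu.min measurable_const).ennreal_toReal.aemeasurable,
    ← Ioo_union_Ici_eq_Ioi zero_lt_one,
    lintegral_union measurableSet_Ici ((Iio_disjoint_Ici le_rfl).mono_left Ioo_subset_Iio_self),
    setLIntegral_congr_fun measurableSet_Ioo hlevel,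
    setLIntegral_congr_fun measurableSet_Ici hempty]
  simp

theorem lintegral_eq_iSup_lintegral_min_natCast {α : Type*} [MeasurableSpace α] (μ : Measure α)
    {f : α → ℝ≥0∞} (hf : Measurable f) : ∫⁻ x, f x ∂μ = ⨆ n : ℕ, ∫⁻ x, min (f x) n ∂μ := by
  rw [← lintegral_iSup (fun n => hf.min measurable_const)
    fun m n hmn x => min_le_min le_rfl (Nat.cast_le.2 hmn)]
  congr with x
  rw [← inf_iSup_eq, iSup_natCast, inf_top_eq]

theorem lintegral_add_le_of_min_le {t : ℝ} (ht₀ : 0 ≤ t) (ht₁ : t ≤ 1) {u v w : ℝ → ℝ≥0∞}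
    (hu : Measurable u) (hv : Measurable v) (hw : Measurable w) (hu₁ : ⨆ x, u x = 1)
    (hv₁ : ⨆ x, v x = 1) (h : ∀ x y, min (u x) (v y) ≤ w ((1 - t) * x + t * y)) :
    ENNReal.ofReal (1 - t) * (∫⁻ x, u x) + ENNReal.ofReal t * ∫⁻ x, v x ≤ ∫⁻ x, w x := by
  set level : (ℝ → ℝ≥0∞) → ℝ → Set ℝ := fun f r => {x | ENNReal.ofReal r < f x}
  have hlevel_nonempty {f : ℝ → ℝ≥0∞} (hf : ⨆ x, f x = 1) {r : ℝ} (hr : r < 1) :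
      (level f r).Nonempty := by
    obtain ⟨x, hx⟩ := lt_iSup_iff.1 (hf ▸ ofReal_lt_one.2 hr)
    exact ⟨x, hx⟩
  have hlevel_add {r : ℝ} : (1 - t) • level u r + t • level v r ⊆ level w r := by
    rintro _ ⟨_, ⟨x, hx, rfl⟩, _, ⟨y, hy, rfl⟩, rfl⟩
    exact (lt_min hx hy).trans_le (h x y)
  have hvolume_smul {s : ℝ} (hs : 0 ≤ s) (A : Set ℝ) :
      volume (s • A) = ENNReal.ofReal s * volume A := by
    simp [Measure.addHaar_smul_of_nonneg volume hs]
  have hlevel_measure (r : ℝ) (hr : r ∈ Ioo 0 1) :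
      ENNReal.ofReal (1 - t) * volume (level u r) + ENNReal.ofReal t * volume (level v r) ≤
        volume (level w r) := by
    rw [← hvolume_smul (sub_nonneg.2 ht₁), ← hvolume_smul ht₀]
    exact ((measurableSet_lt measurable_const hu).const_smul₀ _).volume_add_volume_le_volume_add
      ((measurableSet_lt measurable_const hv).const_smul₀ _)
      ((hlevel_nonempty hu₁ hr.2).smul_set) ((hlevel_nonempty hv₁ hr.2).smul_set)
      |>.trans (measure_mono hlevel_add)
  have hlevel_measurable (f : ℝ → ℝ≥0∞) : Measurable fun r => volume (level f r) :=
    Antitone.measurable fun _ _ hrs => measure_mono fun _ hx => (ofReal_le_ofReal hrs).trans_lt hx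
  have hmin_one {f : ℝ → ℝ≥0∞} (hf : ⨆ x, f x = 1) : (fun x => min (f x) 1) = f :=
    funext fun x => min_eq_left (hf ▸ le_iSup f x)
  calc ENNReal.ofReal (1 - t) * (∫⁻ x, u x) + ENNReal.ofReal t * ∫⁻ x, v x
      = ∫⁻ r in Ioo 0 1, (ENNReal.ofReal (1 - t) * volume (level u r) +
          ENNReal.ofReal t * volume (level v r)) := by
        rw [lintegral_add_left ((hlevel_measurable u).const_mul _),
          lintegral_const_mul _ (hlevel_measurable u), lintegral_const_mul _ (hlevel_measurable v),
          ← lintegral_min_one_eq_setLIntegral_measure_lt _ hu,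
          ← lintegral_min_one_eq_setLIntegral_measure_lt _ hv, hmin_one hu₁, hmin_one hv₁]
    _ ≤ ∫⁻ r in Ioo 0 1, volume (level w r) :=
        setLIntegral_mono (hlevel_measurable w) hlevel_measure
    _ = ∫⁻ x, min (w x) 1 := (lintegral_min_one_eq_setLIntegral_measure_lt _ hw).symm
    _ ≤ ∫⁻ x, w x := lintegral_mono fun x => min_le_left _ _

theorem lintegral_rpow_mul_rpow_le_of_iSup_ne_top {t : ℝ} (ht₀ : 0 < t) (ht₁ : t < 1)
    {u v w : ℝ → ℝ≥0∞} (hu : Measurable u) (hv : Measurable v) (hw : Measurable w)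
    (hu_top : ⨆ x, u x ≠ ∞) (hv_top : ⨆ x, v x ≠ ∞)
    (h : ∀ x y, u x ^ (1 - t) * v y ^ t ≤ w ((1 - t) * x + t * y)) :
    (∫⁻ x, u x) ^ (1 - t) * (∫⁻ x, v x) ^ t ≤ ∫⁻ x, w x := by
  have hs : 0 < 1 - t := sub_pos.2 ht₁
  set M := ⨆ x, u x
  set N := ⨆ x, v x
  rcases eq_or_ne M 0 with hM | hM
  · simp [funext (ENNReal.iSup_eq_zero.1 hM), zero_rpow_of_pos hs]
  rcases eq_or_ne N 0 with hN | hN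
  · simp [funext (ENNReal.iSup_eq_zero.1 hN), zero_rpow_of_pos ht₀]
  set c := M ^ (1 - t) * N ^ t
  have hc₀ : c ≠ 0 := by positivity
  have hM_top : M ^ (1 - t) ≠ ∞ := rpow_ne_top_of_nonneg hs.le hu_top
  have hN_top : N ^ t ≠ ∞ := rpow_ne_top_of_nonneg ht₀.le hv_top
  have hc_top : c ≠ ∞ := mul_ne_top hM_top hN_top
  have hscale (a b : ℝ≥0∞) : (a / M) ^ (1 - t) * (b / N) ^ t = a ^ (1 - t) * b ^ t / c := by
    rw [div_rpow_of_nonneg _ _ hs.le, div_rpow_of_nonneg _ _ ht₀.le,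
      ENNReal.mul_div_mul_comm (.inr hN_top) (.inl hM_top)]
  have hnorm {f : ℝ → ℝ≥0∞} (hK₀ : ⨆ x, f x ≠ 0) (hK_top : ⨆ x, f x ≠ ∞) :
      ⨆ x, f x / ⨆ x, f x = 1 := by
    rw [← ENNReal.iSup_div, ENNReal.div_self hK₀ hK_top]
  have hlintegral_div {f : ℝ → ℝ≥0∞} (hf : Measurable f) (K : ℝ≥0∞) :
      ∫⁻ x, f x / K = (∫⁻ x, f x) / K := by
    simp_rw [div_eq_mul_inv]
    exact lintegral_mul_const _ hf
  have hadd := lintegral_add_le_of_min_le ht₀.le ht₁.le (hu.div_const M) (hv.div_const N)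
    (hw.div_const c) (hnorm hM hu_top) (hnorm hN hv_top) fun x y =>
      (ENNReal.min_le_rpow_mul_rpow _ _ ht₀.le ht₁.le).trans
        (by rw [hscale]; exact ENNReal.div_le_div_right (h x y) c)
  have := (ENNReal.rpow_mul_rpow_le_add _ _ ht₀ ht₁).trans hadd
  rw [hlintegral_div hu, hlintegral_div hv, hlintegral_div hw, hscale] at this
  simpa only [← not_lt, ENNReal.div_lt_div_iff_left hc₀ hc_top] using this

/-- **Prékopa–Leindler inequality** on `ℝ`. -/
theorem lintegral_rpow_mul_rpow_le {t : ℝ} (ht₀ : 0 < t) (ht₁ : t < 1) {u v w : ℝ → ℝ≥0∞}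
    (hu : Measurable u) (hv : Measurable v) (hw : Measurable w)
    (h : ∀ x y, u x ^ (1 - t) * v y ^ t ≤ w ((1 - t) * x + t * y)) :
    (∫⁻ x, u x) ^ (1 - t) * (∫⁻ x, v x) ^ t ≤ ∫⁻ x, w x := by
  have hs : 0 < 1 - t := sub_pos.2 ht₁
  have hsup_min (f : ℝ → ℝ≥0∞) (n : ℕ) : ⨆ x, min (f x) n ≠ ∞ :=
    ne_top_of_le_ne_top (natCast_ne_top n) (iSup_le fun x => min_le_right _ _)
  rw [lintegral_eq_iSup_lintegral_min_natCast _ hu, lintegral_eq_iSup_lintegral_min_natCast _ hv,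
    ENNReal.iSup_rpow _ hs, ENNReal.iSup_rpow _ ht₀, ENNReal.iSup_mul]
  refine iSup_le fun m => ?_
  rw [ENNReal.mul_iSup]
  refine iSup_le fun n => ?_
  refine lintegral_rpow_mul_rpow_le_of_iSup_ne_top ht₀ ht₁ (hu.min measurable_const)
    (hv.min measurable_const) hw (hsup_min u m) (hsup_min v n) fun x y => ?_
  calc min (u x) m ^ (1 - t) * min (v y) n ^ t ≤ u x ^ (1 - t) * v y ^ t := by
        gcongr <;> exact min_le_left _ _
    _ ≤ w ((1 - t) * x + t * y) := h x y

section LogConcave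

variable {E : Type*} [AddCommGroup E] [Module ℝ E] {f : E → ℝ}

theorem ConcaveOn.rpow_mul_rpow_le_of_log (hf₀ : ∀ x, 0 ≤ f x)
    (hf : ConcaveOn ℝ {x | 0 < f x} fun x => Real.log (f x)) {t : ℝ} (ht₀ : 0 < t) (ht₁ : t < 1)
    (x y : E) : f x ^ (1 - t) * f y ^ t ≤ f ((1 - t) • x + t • y) := by
  have hs : 0 < 1 - t := sub_pos.2 ht₁
  rcases (hf₀ x).eq_or_lt with hx | hx
  · rw [← hx, Real.zero_rpow hs.ne', zero_mul]
    exact hf₀ _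
  rcases (hf₀ y).eq_or_lt with hy | hy
  · rw [← hy, Real.zero_rpow ht₀.ne', mul_zero]
    exact hf₀ _
  have hlog := hf.2 hx hy hs.le ht₀.le (sub_add_cancel 1 t)
  rw [← Real.exp_log (hf.1 hx hy hs.le ht₀.le (sub_add_cancel 1 t)), Real.rpow_def_of_pos hx,
    Real.rpow_def_of_pos hy, ← Real.exp_add]
  simpa only [smul_eq_mul, mul_comm, Real.exp_le_exp] using hlog

theorem concaveOn_log_of_rpow_mul_rpow_le
    (hf : ∀ x y, ∀ t : ℝ, 0 < t → t < 1 → f x ^ (1 - t) * f y ^ t ≤ f ((1 - t) • x + t • y)) :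
    ConcaveOn ℝ {x | 0 < f x} fun x => Real.log (f x) := by
  have hcomb {x y : E} (hx : 0 < f x) (hy : 0 < f y) {a b : ℝ} (ha : 0 < a) (hb : 0 < b)
      (hab : a + b = 1) : 0 < f x ^ a * f y ^ b ∧ f x ^ a * f y ^ b ≤ f (a • x + b • y) := by
    obtain rfl : a = 1 - b := by linarith
    exact ⟨mul_pos (Real.rpow_pos_of_pos hx _) (Real.rpow_pos_of_pos hy _),
      hf x y b hb (by linarith)⟩
  refine concaveOn_iff_forall_pos.2 ⟨convex_iff_forall_pos.2 fun x hx y hy a b ha hb hab =>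
    (hcomb hx hy ha hb hab).1.trans_le (hcomb hx hy ha hb hab).2, ?_⟩
  intro x hx y hy a b ha hb hab
  obtain ⟨hpos, hle⟩ := hcomb hx hy ha hb hab
  have := Real.log_le_log hpos hle
  rwa [Real.log_mul (Real.rpow_pos_of_pos hx a).ne' (Real.rpow_pos_of_pos hy b).ne',
    Real.log_rpow hx, Real.log_rpow hy] at this

end LogConcave

theorem toReal_rpow_mul_rpow_le_of_ae_ne_top {H : ℝ → ℝ≥0∞}
    (hH : ∀ x y, ∀ t : ℝ, 0 < t → t < 1 → H x ^ (1 - t) * H y ^ t ≤ H ((1 - t) * x + t * y))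
    (hfin : ∀ᵐ x, H x ≠ ∞) (x y t : ℝ) (ht₀ : 0 < t) (ht₁ : t < 1) :
    (H x).toReal ^ (1 - t) * (H y).toReal ^ t ≤ (H ((1 - t) * x + t * y)).toReal := by
  set z := (1 - t) * x + t * y
  by_cases hz : H z = ∞
  · rcases eq_or_ne (H y).toReal 0 with hy | hy
    · rw [hy, Real.zero_rpow ht₀.ne', mul_zero]
      exact toReal_nonneg
    obtain ⟨hy₀, hy_top⟩ := toReal_ne_zero.1 hy
    have hzy : z ≠ y := fun h => hy_top (h ▸ hz)
    -- `H = ∞` on the whole open segment from `z` to `y`, a set of positive length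
    have hseg : openSegment ℝ z y ⊆ {x | ¬H x ≠ ∞} := by
      rintro _ ⟨a, b, ha, hb, hab, rfl⟩
      obtain rfl : a = 1 - b := by linarith
      have := hH z y b hb (by linarith)
      rw [hz, top_rpow_of_pos ha, top_mul (rpow_pos (pos_iff_ne_zero.2 hy₀) hy_top).ne'] at this
      exact not_not.2 (top_le_iff.1 this)
    have hvol := measure_mono_null hseg (ae_iff.1 hfin)
    rw [openSegment_eq_Ioo' hzy, Real.volume_Ioo, ofReal_eq_zero, sub_nonpos] at hvol
    exact absurd hvol (not_le.2 (min_lt_max.2 hzy))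
  rw [toReal_rpow, toReal_rpow, ← toReal_mul]
  exact toReal_mono hz (hH x y t ht₀ ht₁)

theorem comp_sub_mul_rpow_mul_rpow_le {f g : ℝ → ℝ} (hf₀ : ∀ x, 0 ≤ f x)
    (hf : ConcaveOn ℝ {x | 0 < f x} fun x => Real.log (f x)) (hg₀ : ∀ x, 0 ≤ g x)
    (hg : ConcaveOn ℝ {x | 0 < g x} fun x => Real.log (g x)) {t : ℝ} (ht₀ : 0 < t) (ht₁ : t < 1)
    (a b x y : ℝ) :
    (f (a - x) * g x) ^ (1 - t) * (f (b - y) * g y) ^ t ≤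
      f ((1 - t) * a + t * b - ((1 - t) * x + t * y)) * g ((1 - t) * x + t * y) := by
  have hf' := hf.rpow_mul_rpow_le_of_log hf₀ ht₀ ht₁ (a - x) (b - y)
  have hg' := hg.rpow_mul_rpow_le_of_log hg₀ ht₀ ht₁ x y
  simp only [smul_eq_mul] at hf' hg'
  rw [show (1 - t) * (a - x) + t * (b - y) = (1 - t) * a + t * b - ((1 - t) * x + t * y) by ring]
    at hf'
  rw [Real.mul_rpow (hf₀ _) (hg₀ _), Real.mul_rpow (hf₀ _) (hg₀ _), mul_mul_mul_comm]
  exact mul_le_mul hf' hg' (mul_nonneg (Real.rpow_nonneg (hg₀ _) _) (Real.rpow_nonneg (hg₀ _) _))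
    (hf₀ _)

theorem lintegral_ofReal_comp_sub_mul_rpow_mul_rpow_le {f g : ℝ → ℝ} (hfm : Measurable f)
    (hgm : Measurable g) (hf₀ : ∀ x, 0 ≤ f x)
    (hf : ConcaveOn ℝ {x | 0 < f x} fun x => Real.log (f x)) (hg₀ : ∀ x, 0 ≤ g x)
    (hg : ConcaveOn ℝ {x | 0 < g x} fun x => Real.log (g x)) (a b t : ℝ) (ht₀ : 0 < t)
    (ht₁ : t < 1) :
    (∫⁻ y, ENNReal.ofReal (f (a - y) * g y)) ^ (1 - t) *
        (∫⁻ y, ENNReal.ofReal (f (b - y) * g y)) ^ t ≤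
      ∫⁻ y, ENNReal.ofReal (f ((1 - t) * a + t * b - y) * g y) := by
  have hmeas (x : ℝ) : Measurable fun y => ENNReal.ofReal (f (x - y) * g y) := by fun_prop
  exact lintegral_rpow_mul_rpow_le ht₀ ht₁ (hmeas a) (hmeas b) (hmeas _) fun x y =>
    ENNReal.ofReal_rpow_mul_rpow_le (mul_nonneg (hf₀ _) (hg₀ _)) (mul_nonneg (hf₀ _) (hg₀ _))
      ht₀.le ht₁.le (comp_sub_mul_rpow_mul_rpow_le hf₀ hf hg₀ hg ht₀ ht₁ a b x y)

theorem convolution_mul_eq_integral_comp_sub_mul (f g : ℝ → ℝ) (x : ℝ) :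
    convolution g f (ContinuousLinearMap.mul ℝ ℝ) volume x = ∫ y, f (x - y) * g y := by
  simp only [convolution_def, ContinuousLinearMap.mul_apply', mul_comm]

theorem stmt_10 (f g : ℝ → ℝ) (hfm : Measurable f) (hgm : Measurable g)
    (hf : IsLogConcaveDensity f) (hg : IsLogConcaveDensity g) :
    IsLogConcaveDensity (fun x => ∫ y, f (x - y) * g y) := by
  obtain ⟨hf₀, hf₁, -, hf⟩ := hf
  obtain ⟨hg₀, hg₁, -, hg⟩ := hg
  have hfi : Integrable f := .of_integral_ne_zero (by simp [hf₁])
  have hgi : Integrable g := .of_integral_ne_zero (by simp [hg₁])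
  set H : ℝ → ℝ≥0∞ := fun x => ∫⁻ y, ENNReal.ofReal (f (x - y) * g y)
  have hH (x : ℝ) : ∫ y, f (x - y) * g y = (H x).toReal :=
    integral_eq_lintegral_of_nonneg_ae (ae_of_all _ fun y => mul_nonneg (hf₀ _) (hg₀ _))
      (by fun_prop)
  have hH_top : ∀ᵐ x, H x ≠ ∞ := by
    filter_upwards [hgi.ae_convolution_exists (ContinuousLinearMap.mul ℝ ℝ) hfi] with x hx
    have : Integrable fun y => f (x - y) * g y := by
      simpa only [ConvolutionExistsAt, ContinuousLinearMap.mul_apply', mul_comm] using hx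
    exact this.lintegral_lt_top.ne
  have hconc : ConcaveOn ℝ {x | 0 < ∫ y, f (x - y) * g y}
      fun x => Real.log (∫ y, f (x - y) * g y) := by
    simp_rw [hH]
    exact concaveOn_log_of_rpow_mul_rpow_le <| toReal_rpow_mul_rpow_le_of_ae_ne_top
      (lintegral_ofReal_comp_sub_mul_rpow_mul_rpow_le hfm hgm hf₀ hf hg₀ hg) hH_top
  refine ⟨fun x => integral_nonneg fun y => mul_nonneg (hf₀ _) (hg₀ _), ?_, hconc.1, hconc⟩
  simp_rw [← convolution_mul_eq_integral_comp_sub_mul, integral_convolution _ hgi hfi,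
    ContinuousLinearMap.mul_apply', hf₁, hg₁, mul_one]
end
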